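/- (Theorem 2, count bound.) Let ℓ^t = w_t·ℓ̲ + (1 − w_t)·ℓ̄ be the boundary-design games, let (Ω, ℱ, ℙ) be a probability space, and let a^1,…,a^T : Ω → 𝒜 be random action profiles. Then for every player i, the expected count N_i^T = #{t ≤ T : a^t_i = a†_i} satisfies E[N_i^T] ≥ T − (M / ((M−1)·ρ))·E[R_i^T]·T^{1−c} − (1/c)·T^{1−c}, where R_i^T is the best-in-hindsight regret with respect to the loss sequence ℓ^1,…,ℓ^T. Consequently, if E[R_i^T] ≤ R̄ for all i, then T − E[N^T] ≤ M·((M/((M−1)·ρ))·R̄ + 1/c)·T^{1−c}, where N^T = #{t ≤ T : a^t = a†}. -/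

import Mathlib

/-!
Switching to the target action `a†_i` lowers player `i`'s source-game loss by exactly
`(M - 1) ρ / M`, whatever the other players do (it raises `d(a)` by one). In the game `ℓ^t` the
gain is `t^(c-1) (M - 1) ρ / M ≥ T^(c-1) (M - 1) ρ / M`, so comparing with the constant action
`a†_i` shows, pathwise, that `R_i^T` is at least `T^(c-1) (M - 1) ρ / M` times the number of
rounds in which `i` missed `a†_i`. Taking expectations gives the bound for `N_i^T` (the `1/c`
term is slack), and a union bound over the players gives the bound for `N^T`.
-/

open Finset MeasureTheory Function

lemma card_filter_update_eq_add_one {ι : Type*} [Fintype ι] [DecidableEq ι] {β : ι → Type*}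
    [∀ i, DecidableEq (β i)] {a b : ∀ i, β i} {i : ι} (h : a i ≠ b i) :
    (univ.filter fun j => update a i (b i) j = b j).card
      = (univ.filter fun j => a j = b j).card + 1 := by
  have : (univ.filter fun j => update a i (b i) j = b j)
      = insert i (univ.filter fun j => a j = b j) := by
    ext j
    by_cases hj : j = i
    · subst hj; simp
    · simp [hj]
  rw [this, card_insert_of_notMem (by simp [h])]

lemma card_filter_ne_le_sum {ι κ : Type*} [Fintype ι] [DecidableEq κ] {β : ι → Type*}
    [∀ i, DecidableEq (β i)] (s : Finset κ) (x : κ → ∀ i, β i) (y : ∀ i, β i) :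
    (s.filter fun t => x t ≠ y).card ≤ ∑ i, (s.filter fun t => x t i ≠ y i).card := by
  refine (card_le_card fun t ht => ?_).trans card_biUnion_le
  obtain ⟨hts, hne⟩ := mem_filter.mp ht
  obtain ⟨i, hi⟩ := ne_iff.mp hne
  exact mem_biUnion.mpr ⟨i, mem_univ i, mem_filter.mpr ⟨hts, hi⟩⟩

section Regret

variable {ι : Type*} [DecidableEq ι] {A : ι → Type*} [∀ i, Fintype (A i)]
  [∀ i, Nonempty (A i)]

def regret (ℓ : ℕ → (∀ j, A j) → ι → ℝ) (s : Finset ℕ) (i : ι) (x : ℕ → ∀ j, A j) :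
    ℝ :=
  ∑ t ∈ s, ℓ t (x t) i
    - univ.inf' univ_nonempty fun b : A i => ∑ t ∈ s, ℓ t (update (x t) i b) i

variable {ℓ : ℕ → (∀ j, A j) → ι → ℝ} {s : Finset ℕ} {i : ι}

lemma dependsOn_regret : DependsOn (regret ℓ s i) s := by
  intro x y hxy
  simp only [regret]
  congr 1
  · exact sum_congr rfl fun t ht => by rw [hxy t ht]
  · congr 1
    funext b
    exact sum_congr rfl fun t ht => by rw [hxy t ht]

lemma mul_card_filter_ne_le_regret [∀ i, DecidableEq (A i)] {g : ℝ} {b : A i}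
    (hgain : ∀ t ∈ s, ∀ a : ∀ j, A j, a i ≠ b →
      g ≤ ℓ t a i - ℓ t (update a i b) i)
    (x : ℕ → ∀ j, A j) :
    g * (s.filter fun t => x t i ≠ b).card ≤ regret ℓ s i x := calc
  g * (s.filter fun t => x t i ≠ b).card = ∑ t ∈ s, if x t i ≠ b then g else 0 := by
    rw [sum_ite, sum_const_zero, sum_const, add_zero, nsmul_eq_mul, mul_comm]
  _ ≤ ∑ t ∈ s, (ℓ t (x t) i - ℓ t (update (x t) i b) i) := by
    refine sum_le_sum fun t ht => ?_
    split_ifs with h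
    · exact hgain t ht (x t) h
    · rw [update_eq_self_iff.mpr (not_not.mp h).symm, sub_self]
  _ ≤ regret ℓ s i x := by
    rw [sum_sub_distrib, regret]
    gcongr
    exact inf'_le _ (mem_univ b)

end Regret

lemma integral_card_filter_not {Ω κ : Type*} [MeasurableSpace Ω] (P : Measure Ω)
    [IsProbabilityMeasure P] (s : Finset κ) (p : κ → Ω → Prop) [∀ t ω, Decidable (p t ω)]
    (hp : Integrable (fun ω => ((s.filter fun t => p t ω).card : ℝ)) P) :
    ∫ ω, ((s.filter fun t => ¬ p t ω).card : ℝ) ∂P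
      = s.card - ∫ ω, ((s.filter fun t => p t ω).card : ℝ) ∂P := by
  have hsum (ω : Ω) : ((s.filter fun t => ¬ p t ω).card : ℝ)
      = s.card - (s.filter fun t => p t ω).card := by
    rw [eq_sub_iff_add_eq, add_comm]
    exact_mod_cast card_filter_add_card_filter_not (s := s) fun t => p t ω
  simp only [hsum]
  rw [integral_sub (integrable_const _) hp, integral_const, probReal_univ, one_smul]

section RandomPlay

variable {Ω : Type*} [MeasurableSpace Ω] (P : Measure Ω) [IsFiniteMeasure P]

lemma integrable_comp_of_dependsOn {ι : Type*} {β : ι → Type*} [∀ t, MeasurableSpace (β t)]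
    [∀ t, Finite (β t)] [∀ t, MeasurableSingletonClass (β t)] {X : Ω → ∀ t, β t}
    (hX : ∀ t, Measurable fun ω => X ω t) {s : Set ι} (hs : s.Finite)
    {F : (∀ t, β t) → ℝ} (hF : DependsOn F s) : Integrable (fun ω => F (X ω)) P := by
  obtain ⟨g, rfl⟩ := dependsOn_iff_exists_comp.mp hF
  have := hs.to_subtype
  exact Integrable.of_finite.comp_measurable (measurable_pi_lambda _ fun t => hX t)

lemma dependsOn_card_filter {κ β : Type*} (s : Finset κ) (p : κ → β → Prop)
    [∀ t b, Decidable (p t b)] :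
    DependsOn (fun x : κ → β => ((s.filter fun t => p t (x t)).card : ℝ)) s := by
  intro x y hxy
  have : s.filter (fun t => p t (x t)) = s.filter fun t => p t (y t) :=
    filter_congr fun t ht => by rw [hxy t ht]
  simp only [this]

variable {ι : Type*} [Fintype ι] {A : ι → Type*} [∀ i, Fintype (A i)]
  [∀ i, MeasurableSpace (A i)] [∀ i, MeasurableSingletonClass (A i)]
  {X : Ω → ℕ → ∀ i, A i}

lemma integrable_card_filter (hX : ∀ t, Measurable fun ω => X ω t) (s : Finset ℕ)
    (p : ℕ → (∀ i, A i) → Prop) [∀ t a, Decidable (p t a)] :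
    Integrable (fun ω => ((s.filter fun t => p t (X ω t)).card : ℝ)) P :=
  integrable_comp_of_dependsOn P hX s.finite_toSet (dependsOn_card_filter s p)

lemma integrable_regret [DecidableEq ι] [∀ i, Nonempty (A i)]
    (hX : ∀ t, Measurable fun ω => X ω t) (ℓ : ℕ → (∀ j, A j) → ι → ℝ)
    (s : Finset ℕ) (i : ι) : Integrable (fun ω => regret ℓ s i (X ω)) P :=
  integrable_comp_of_dependsOn P hX s.finite_toSet dependsOn_regret

lemma integral_card_filter_ne_le_sum [∀ i, DecidableEq (A i)]
    (hX : ∀ t, Measurable fun ω => X ω t) (s : Finset ℕ) (y : ∀ i, A i) :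
    ∫ ω, ((s.filter fun t => X ω t ≠ y).card : ℝ) ∂P
      ≤ ∑ i, ∫ ω, ((s.filter fun t => X ω t i ≠ y i).card : ℝ) ∂P := by
  have hint (i : ι) := integrable_card_filter P hX s fun _ a => a i ≠ y i
  rw [← integral_finsetSum _ fun i _ => hint i]
  refine integral_mono (integrable_card_filter P hX s fun _ a => a ≠ y)
    (integrable_finsetSum _ fun i _ => hint i) fun ω => ?_
  dsimp only
  exact_mod_cast card_filter_ne_le_sum s (X ω) y

end RandomPlay

section BoundaryDesign

variable {M : ℕ} {A : Fin M → Type*} [∀ i, DecidableEq (A i)]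

noncomputable def sourceGame (adag : ∀ i, A i) (v : Fin M → ℝ) (ρ : ℝ) (a : ∀ i, A i)
    (i : Fin M) : ℝ :=
  if a i = adag i
  then v i - (1 - ((univ.filter fun j => a j = adag j).card : ℝ) / M) * ρ
  else v i + (((univ.filter fun j => a j = adag j).card : ℝ) / M) * ρ

variable {adag : ∀ i, A i} {v : Fin M → ℝ} {ρ : ℝ}

lemma sourceGame_sub_update_target {a : ∀ i, A i} {i : Fin M} (h : a i ≠ adag i) :
    sourceGame adag v ρ a i - sourceGame adag v ρ (update a i (adag i)) i
      = (M - 1) * ρ / M := by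
  rw [sourceGame, sourceGame, if_neg h, if_pos (update_self i (adag i) a),
    card_filter_update_eq_add_one h]
  have : (M : ℝ) ≠ 0 := Nat.cast_ne_zero.mpr (Fin.pos i).ne'
  push_cast
  field_simp
  ring

lemma boundaryGame_gain {ℓ : ℕ → (∀ i, A i) → Fin M → ℝ} {ℓbar : Fin M → ℝ} {c : ℝ}
    (hℓ : ∀ (t : ℕ) a i,
      ℓ t a i = (t : ℝ) ^ (c - 1) * sourceGame adag v ρ a i
        + (1 - (t : ℝ) ^ (c - 1)) * ℓbar i)
    (hρ : 0 ≤ ρ) (hc : c ≤ 1) {T : ℕ} {i : Fin M} :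
    ∀ t ∈ Icc 1 T, ∀ a : ∀ j, A j, a i ≠ adag i →
      (T : ℝ) ^ (c - 1) * ((M - 1) * ρ / M) ≤ ℓ t a i - ℓ t (update a i (adag i)) i := by
  intro t ht a h
  obtain ⟨ht1, htT⟩ := mem_Icc.mp ht
  have hD : 0 ≤ ((M : ℝ) - 1) * ρ / M := by
    have : (1 : ℝ) ≤ M := Nat.one_le_cast.mpr (Fin.pos i)
    exact div_nonneg (mul_nonneg (by linarith) hρ) (by linarith)
  have hweight : (T : ℝ) ^ (c - 1) ≤ (t : ℝ) ^ (c - 1) :=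
    Real.rpow_le_rpow_of_nonpos (by exact_mod_cast ht1) (by exact_mod_cast htT) (by linarith)
  calc (T : ℝ) ^ (c - 1) * ((M - 1) * ρ / M) ≤ (t : ℝ) ^ (c - 1) * ((M - 1) * ρ / M) :=
        mul_le_mul_of_nonneg_right hweight hD
    _ = ℓ t a i - ℓ t (update a i (adag i)) i := by
        rw [hℓ, hℓ, ← sourceGame_sub_update_target h]; ring

lemma card_filter_ne_target_le_regret [∀ i, Fintype (A i)] [∀ i, Nonempty (A i)]
    {ℓ : ℕ → (∀ i, A i) → Fin M → ℝ} {ℓbar : Fin M → ℝ} {c : ℝ}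
    (hℓ : ∀ (t : ℕ) a i,
      ℓ t a i = (t : ℝ) ^ (c - 1) * sourceGame adag v ρ a i
        + (1 - (t : ℝ) ^ (c - 1)) * ℓbar i)
    (hM : 2 ≤ M) (hρ : 0 < ρ) (hc : c ≤ 1) {T : ℕ} (hT : 1 ≤ T) (i : Fin M)
    (x : ℕ → ∀ j, A j) :
    (((Icc 1 T).filter fun t => x t i ≠ adag i).card : ℝ)
      ≤ M / ((M - 1) * ρ) * (T : ℝ) ^ (1 - c) * regret ℓ (Icc 1 T) i x := by
  have hM1 : (0 : ℝ) < M - 1 := by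
    have : (2 : ℝ) ≤ M := by exact_mod_cast hM
    linarith
  have hgain : 0 < (T : ℝ) ^ (c - 1) * ((M - 1) * ρ / M) :=
    mul_pos (Real.rpow_pos_of_pos (by exact_mod_cast hT) _)
      (div_pos (mul_pos hM1 hρ) (by linarith))
  have hκ : M / ((M - 1) * ρ) * (T : ℝ) ^ (1 - c)
      = ((T : ℝ) ^ (c - 1) * ((M - 1) * ρ / M))⁻¹ := by
    rw [mul_inv, inv_div, ← Real.rpow_neg (Nat.cast_nonneg T), neg_sub, mul_comm]
  rw [hκ, le_inv_mul_iff₀ hgain]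
  exact mul_card_filter_ne_le_regret (boundaryGame_gain hℓ hρ.le hc) x

lemma integral_card_filter_ne_target_le [∀ i, Fintype (A i)] [∀ i, Nonempty (A i)]
    [∀ i, MeasurableSpace (A i)] [∀ i, MeasurableSingletonClass (A i)]
    {Ω : Type*} [MeasurableSpace Ω] (P : Measure Ω) [IsFiniteMeasure P]
    {X : Ω → ℕ → ∀ i, A i} (hX : ∀ t, Measurable fun ω => X ω t)
    {ℓ : ℕ → (∀ i, A i) → Fin M → ℝ} {ℓbar : Fin M → ℝ} {c : ℝ}
    (hℓ : ∀ (t : ℕ) a i,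
      ℓ t a i = (t : ℝ) ^ (c - 1) * sourceGame adag v ρ a i
        + (1 - (t : ℝ) ^ (c - 1)) * ℓbar i)
    (hM : 2 ≤ M) (hρ : 0 < ρ) (hc : c ≤ 1) {T : ℕ} (hT : 1 ≤ T) (i : Fin M) :
    ∫ ω, (((Icc 1 T).filter fun t => X ω t i ≠ adag i).card : ℝ) ∂P
      ≤ M / ((M - 1) * ρ) * (T : ℝ) ^ (1 - c) * ∫ ω, regret ℓ (Icc 1 T) i (X ω) ∂P := by
  rw [← integral_const_mul]
  exact integral_mono (integrable_card_filter P hX _ fun _ a => a i ≠ adag i)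
    ((integrable_regret P hX ℓ (Icc 1 T) i).const_mul _)
    fun ω => card_filter_ne_target_le_regret hℓ hM hρ hc hT i (X ω)

end BoundaryDesign

theorem boundary_design_count_bound_general
    {M : ℕ} (hM : 2 ≤ M)
    {A : Fin M → Type} [∀ i, Fintype (A i)] [∀ i, Nonempty (A i)]
    [∀ i, DecidableEq (A i)]
    (adag : ∀ i, A i)
    (ρ : ℝ) (hρ0 : 0 < ρ)
    (ℓo : (∀ i, A i) → Fin M → ℝ)
    (v : Fin M → ℝ)
    (ℓund : (∀ i, A i) → Fin M → ℝ)
    (hℓund : ∀ a i, ℓund a i =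
      if a i = adag i
      then v i - (1 - ((univ.filter fun j => a j = adag j).card : ℝ) / M) * ρ
      else v i + (((univ.filter fun j => a j = adag j).card : ℝ) / M) * ρ)
    (c : ℝ) (hc : c ∈ Set.Ioc (0 : ℝ) 1)
    (ℓt : ℕ → (∀ i, A i) → Fin M → ℝ)
    (hℓt : ∀ (t : ℕ) (a : ∀ i, A i) (i : Fin M), ℓt t a i =
      (t : ℝ) ^ (c - 1) * ℓund a i + (1 - (t : ℝ) ^ (c - 1)) * ℓo adag i)
    {Ω : Type} [MeasurableSpace Ω] (P : Measure Ω) [IsProbabilityMeasure P]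
    [∀ i, MeasurableSpace (A i)] [∀ i, MeasurableSingletonClass (A i)]
    (T : ℕ) (hT : 1 ≤ T) (ap : ℕ → Ω → ∀ j, A j)
    (hmeas : ∀ t, Measurable (ap t))
    (R : Fin M → Ω → ℝ)
    (hR : ∀ i ω, R i ω =
      (∑ t ∈ Finset.Icc 1 T, ℓt t (ap t ω) i)
        - univ.inf' univ_nonempty
            (fun b : A i => ∑ t ∈ Finset.Icc 1 T, ℓt t (Function.update (ap t ω) i b) i)) :
    (∀ i : Fin M,
      (T : ℝ) - ((M : ℝ) / (((M : ℝ) - 1) * ρ)) * (∫ ω, R i ω ∂P) * (T : ℝ) ^ (1 - c)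
          - (1 / c) * (T : ℝ) ^ (1 - c)
        ≤ ∫ ω, (((Finset.Icc 1 T).filter fun t => ap t ω i = adag i).card : ℝ) ∂P)
    ∧ (∀ Rbar : ℝ, (∀ i, ∫ ω, R i ω ∂P ≤ Rbar) →
        (T : ℝ) - ∫ ω, (((Finset.Icc 1 T).filter fun t => ap t ω = adag).card : ℝ) ∂P
          ≤ (M : ℝ) * (((M : ℝ) / (((M : ℝ) - 1) * ρ)) * Rbar + 1 / c)
              * (T : ℝ) ^ (1 - c)) := by
  obtain ⟨hc0, hc1⟩ := hc
  obtain rfl : ℓund = sourceGame adag v ρ := funext fun a => funext (hℓund a)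
  set κ : ℝ := M / ((M - 1) * ρ) * (T : ℝ) ^ (1 - c)
  have hκ : 0 ≤ κ := by
    have : (2 : ℝ) ≤ M := by exact_mod_cast hM
    exact mul_nonneg (div_nonneg (by linarith) (mul_nonneg (by linarith) hρ0.le)) (by positivity)
  have hslack : 0 ≤ 1 / c * (T : ℝ) ^ (1 - c) := by positivity
  have hcard : ((Icc 1 T).card : ℝ) = T := by simp
  have hmiss (i : Fin M) :
      ∫ ω, (((Icc 1 T).filter fun t => ap t ω i ≠ adag i).card : ℝ) ∂P
        ≤ κ * ∫ ω, R i ω ∂P := by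
    rw [funext (hR i)]
    exact integral_card_filter_ne_target_le P hmeas hℓt hM hρ0 hc1 hT i
  refine ⟨fun i => ?_, fun Rbar hRbar => ?_⟩
  · have := integral_card_filter_not P (Icc 1 T) (fun t ω => ap t ω i = adag i)
      (integrable_card_filter P hmeas _ fun _ a => a i = adag i)
    linarith [hmiss i]
  · calc (T : ℝ) - ∫ ω, (((Icc 1 T).filter fun t => ap t ω = adag).card : ℝ) ∂P
        = ∫ ω, (((Icc 1 T).filter fun t => ap t ω ≠ adag).card : ℝ) ∂P := by
          rw [← hcard, integral_card_filter_not P (Icc 1 T) (fun t ω => ap t ω = adag)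
            (integrable_card_filter P hmeas _ fun _ a => a = adag)]
      _ ≤ ∑ i, ∫ ω, (((Icc 1 T).filter fun t => ap t ω i ≠ adag i).card : ℝ) ∂P :=
          integral_card_filter_ne_le_sum P hmeas _ adag
      _ ≤ ∑ _i : Fin M, κ * Rbar :=
          sum_le_sum fun i _ => (hmiss i).trans (mul_le_mul_of_nonneg_left (hRbar i) hκ)
      _ ≤ M * (M / ((M - 1) * ρ) * Rbar + 1 / c) * (T : ℝ) ^ (1 - c) := by
          simp only [sum_const, card_univ, Fintype.card_fin, nsmul_eq_mul, κ]
          nlinarith [hslack]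

/-- Theorem 2, count bound: under the boundary-design games, every player's
expected count of target-action plays satisfies
`E[N_i^T] ≥ T - (M/((M-1)ρ)) E[R_i^T] T^(1-c) - (1/c) T^(1-c)`, and if every
player's expected regret is at most `R̄`, then
`T - E[N^T] ≤ M ((M/((M-1)ρ)) R̄ + 1/c) T^(1-c)`. -/
theorem boundary_design_count_bound
    {M : ℕ} (hM : 2 ≤ M)
    {A : Fin M → Type} [∀ i, Fintype (A i)] [∀ i, Nonempty (A i)]
    [∀ i, DecidableEq (A i)]
    (L U : ℝ) (hLU : L < U)
    (adag : ∀ i, A i)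
    (ρ : ℝ) (hρ0 : 0 < ρ) (hρU : ρ ≤ (U - L) / 2)
    (ℓo : (∀ i, A i) → Fin M → ℝ)
    (hℓo : ∀ i, ℓo adag i ∈ Set.Icc (L + ρ) (U - ρ))
    (v : Fin M → ℝ) (hv : ∀ i, v i ∈ Set.Icc (L + ρ) (U - ρ))
    (ℓund : (∀ i, A i) → Fin M → ℝ)
    (hℓund : ∀ a i, ℓund a i =
      if a i = adag i
      then v i - (1 - ((univ.filter fun j => a j = adag j).card : ℝ) / M) * ρ
      else v i + (((univ.filter fun j => a j = adag j).card : ℝ) / M) * ρ)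
    (c : ℝ) (hc : c ∈ Set.Ioc (0 : ℝ) 1)
    (ℓt : ℕ → (∀ i, A i) → Fin M → ℝ)
    (hℓt : ∀ (t : ℕ) (a : ∀ i, A i) (i : Fin M), ℓt t a i =
      (t : ℝ) ^ (c - 1) * ℓund a i + (1 - (t : ℝ) ^ (c - 1)) * ℓo adag i)
    {Ω : Type} [MeasurableSpace Ω] (P : Measure Ω) [IsProbabilityMeasure P]
    [∀ i, MeasurableSpace (A i)] [∀ i, MeasurableSingletonClass (A i)]
    (T : ℕ) (hT : 1 ≤ T) (ap : ℕ → Ω → ∀ j, A j)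
    (hmeas : ∀ t, Measurable (ap t))
    (R : Fin M → Ω → ℝ)
    (hR : ∀ i ω, R i ω =
      (∑ t ∈ Finset.Icc 1 T, ℓt t (ap t ω) i)
        - univ.inf' univ_nonempty
            (fun b : A i => ∑ t ∈ Finset.Icc 1 T, ℓt t (Function.update (ap t ω) i b) i)) :
    (∀ i : Fin M,
      (T : ℝ) - ((M : ℝ) / (((M : ℝ) - 1) * ρ)) * (∫ ω, R i ω ∂P) * (T : ℝ) ^ (1 - c)
          - (1 / c) * (T : ℝ) ^ (1 - c)
        ≤ ∫ ω, (((Finset.Icc 1 T).filter fun t => ap t ω i = adag i).card : ℝ) ∂P)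
    ∧ (∀ Rbar : ℝ, (∀ i, ∫ ω, R i ω ∂P ≤ Rbar) →
        (T : ℝ) - ∫ ω, (((Finset.Icc 1 T).filter fun t => ap t ω = adag).card : ℝ) ∂P
          ≤ (M : ℝ) * (((M : ℝ) / (((M : ℝ) - 1) * ρ)) * Rbar + 1 / c)
              * (T : ℝ) ^ (1 - c)) :=
  boundary_design_count_bound_general hM adag ρ hρ0 ℓo v ℓund hℓund c hc ℓt hℓt P T hT ap hmeas R hR
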